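/- Let 0 < γ < 1, 0 < α < 1 and n ≥ 1. Then |t_n| < (1−α)^γ γ^{−n} Γ(γ)^{−1} ∑_{l=1}^∞ l^{n+γ−1} α^l, where the series on the right (which equals the polylogarithm Li_{−n−γ+1}(α)) converges; here Γ is the Gamma function. -/

import Mathlib

/-- Pochhammer symbol `(γ)_l = γ(γ+1)⋯(γ+l−1)`. -/
noncomputable def poch (γ : ℝ) (l : ℕ) : ℝ := ∏ i ∈ Finset.range l, (γ + i)

/-- Stirling numbers of the second kind. -/
def stirling2 : ℕ → ℕ → ℕ
  | 0, 0 => 1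
  | 0, _+1 => 0
  | _+1, 0 => 0
  | n+1, k+1 => (k+1) * stirling2 n (k+1) + stirling2 n k

/-- `t_n(α,γ) = (−1)^n γ^{−n} ∑_{i=0}^n S(n,i) (γ)_i (α/(1−α))^i`. -/
noncomputable def tcoef (α γ : ℝ) (n : ℕ) : ℝ :=
  (-1)^n * (γ^n)⁻¹ *
    ∑ i ∈ Finset.range (n+1), (stirling2 n i : ℝ) * poch γ i * (α/(1-α))^i

/-!
By the binomial series `(1 - α) ^ (-γ) = ∑ (γ)_l α ^ l / l!` and the expansion
`l ^ n = ∑ S(n, i) l (l - 1) ⋯ (l - i + 1)` of powers in falling factorials,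
`(1 - α) ^ (-γ) ∑_i S(n, i) (γ)_i (α / (1 - α)) ^ i = ∑_l (γ)_l / l! · l ^ n α ^ l`, so
`|t_n| = γ ^ (-n) (1 - α) ^ γ ∑_l (γ)_l / l! · l ^ n α ^ l`. Log-convexity of `Γ` gives Gautschi's
inequality `Γ(x + γ) ≤ x ^ γ Γ(x)`, hence `(γ)_l / l! = Γ(γ + l) / (Γ(γ) l!) ≤ l ^ (γ - 1) / Γ(γ)`
for `l ≥ 1`, strictly for `l = 1` because `Γ(1 + γ) < 1`.
-/

open Finset Real Nat

lemma poch_succ (γ : ℝ) (l : ℕ) : poch γ (l + 1) = poch γ l * (γ + l) :=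
  prod_range_succ _ _

lemma poch_pos {γ : ℝ} (hγ : 0 < γ) (l : ℕ) : 0 < poch γ l :=
  prod_pos fun _ _ => by positivity

lemma poch_add (γ : ℝ) (i m : ℕ) : poch γ (i + m) = poch γ i * poch (γ + i) m := by
  simp only [poch, prod_range_add, Nat.cast_add, add_assoc]

lemma poch_eq_eval_ascPochhammer (γ : ℝ) (l : ℕ) : poch γ l = (ascPochhammer ℝ l).eval γ := by
  induction l with
  | zero => simp [poch]
  | succ l ih => rw [poch_succ, ih, ascPochhammer_succ_eval]

lemma Gamma_add_nat_eq_poch_mul {γ : ℝ} (hγ : 0 < γ) (l : ℕ) :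
    Gamma (γ + l) = poch γ l * Gamma γ := by
  induction l with
  | zero => simp [poch]
  | succ l ih =>
    rw [Nat.cast_succ, ← add_assoc, Gamma_add_one (by positivity), ih, poch_succ]
    ring

lemma choose_add_sub_one_eq_poch_div (a : ℝ) (m : ℕ) :
    Ring.choose (a + m - 1) m = poch a m / m ! := by
  rw [← Ring.multichoose_eq, eq_div_iff (by positivity), mul_comm, ← nsmul_eq_mul,
    Ring.factorial_nsmul_multichoose_eq_ascPochhammer, Polynomial.ascPochhammer_smeval_eq_eval,
    poch_eq_eval_ascPochhammer]

lemma hasSum_poch_div_factorial_mul_pow (a : ℝ) {x : ℝ} (hx : |x| < 1) :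
    HasSum (fun m => poch a m / m ! * x ^ m) ((1 - x) ^ (-a)) := by
  have := (one_div_one_sub_rpow_hasFPowerSeriesOnBall_zero a).hasSum (y := x)
    (by simpa [enorm_eq_nnnorm, ← NNReal.coe_lt_coe] using hx)
  simpa [FormalMultilinearSeries.ofScalars_apply_eq, choose_add_sub_one_eq_poch_div, mul_comm,
    rpow_neg (by linarith [abs_lt.1 hx] : (0:ℝ) ≤ 1 - x)] using this

lemma stirling2_eq_stirlingSecond : stirling2 = Nat.stirlingSecond := by
  funext n k
  induction n generalizing k with
  | zero => cases k <;> rfl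
  | succ n ih => cases k <;> simp [stirling2, Nat.stirlingSecond_succ_succ, ih]

lemma Nat.mul_descFactorial_eq_descFactorial_succ_add (l i : ℕ) :
    l * l.descFactorial i = l.descFactorial (i + 1) + i * l.descFactorial i := by
  rcases le_or_gt i l with h | h
  · rw [Nat.descFactorial_succ, ← add_mul, Nat.sub_add_cancel h]
  · simp [Nat.descFactorial_eq_zero_iff_lt.2 h]

lemma Nat.pow_eq_sum_stirlingSecond_mul_descFactorial (n l : ℕ) :
    l ^ n = ∑ i ∈ range (n + 1), stirlingSecond n i * l.descFactorial i := by
  induction n with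
  | zero => simp
  | succ n ih =>
    have shift : ∑ i ∈ range (n + 1), i * stirlingSecond n i * l.descFactorial i =
        ∑ i ∈ range (n + 1), (i + 1) * stirlingSecond n (i + 1) * l.descFactorial (i + 1) := by
      rw [sum_range_succ', sum_range_succ, stirlingSecond_eq_zero_of_lt (Nat.lt_succ_self n)]
      simp
    rw [sum_range_succ', stirlingSecond_succ_zero, zero_mul, add_zero, pow_succ, ih, sum_mul]
    calc ∑ i ∈ range (n + 1), stirlingSecond n i * l.descFactorial i * l
        = ∑ i ∈ range (n + 1), (stirlingSecond n i * l.descFactorial (i + 1) +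
            i * stirlingSecond n i * l.descFactorial i) :=
          sum_congr rfl fun i _ => by
            rw [mul_assoc, mul_comm _ l, Nat.mul_descFactorial_eq_descFactorial_succ_add]
            ring
      _ = ∑ i ∈ range (n + 1), stirlingSecond (n + 1) (i + 1) * l.descFactorial (i + 1) := by
          rw [sum_add_distrib, shift, ← sum_add_distrib]
          exact sum_congr rfl fun i _ => by rw [stirlingSecond_succ_succ]; ring

lemma hasSum_poch_div_factorial_mul_descFactorial_mul_pow (γ : ℝ) (i : ℕ) {x : ℝ}
    (hx : |x| < 1) :
    HasSum (fun l => poch γ l / l ! * l.descFactorial i * x ^ l)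
      (poch γ i * x ^ i * (1 - x) ^ (-(γ + i))) := by
  rw [← hasSum_nat_add_iff' i, sum_eq_zero fun l hl => by
    simp [Nat.descFactorial_eq_zero_iff_lt.2 (mem_range.1 hl)], sub_zero]
  refine ((hasSum_poch_div_factorial_mul_pow (γ + i) hx).mul_left (poch γ i * x ^ i)).congr_fun
    fun m => ?_
  have hfac : ((m + i)! : ℝ) = m ! * (m + i).descFactorial i := by
    have := Nat.factorial_mul_descFactorial (Nat.le_add_left i m)
    rw [Nat.add_sub_cancel] at this
    exact_mod_cast this.symm
  rw [add_comm m i, poch_add, pow_add, add_comm i m, hfac]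
  field_simp

lemma hasSum_poch_div_factorial_mul_pow_mul_pow (γ : ℝ) (n : ℕ) {x : ℝ} (hx : |x| < 1) :
    HasSum (fun l => poch γ l / l ! * (l : ℝ) ^ n * x ^ l)
      ((1 - x) ^ (-γ) *
        ∑ i ∈ range (n + 1), (stirling2 n i : ℝ) * poch γ i * (x / (1 - x)) ^ i) := by
  have hx' : 0 < 1 - x := by linarith [abs_lt.1 hx]
  have hvalue : (1 - x) ^ (-γ) *
        ∑ i ∈ range (n + 1), (stirling2 n i : ℝ) * poch γ i * (x / (1 - x)) ^ i =
      ∑ i ∈ range (n + 1), (stirling2 n i : ℝ) * (poch γ i * x ^ i * (1 - x) ^ (-(γ + i))) := by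
    rw [mul_sum]
    refine sum_congr rfl fun i _ => ?_
    rw [neg_add, rpow_add hx', rpow_neg hx'.le (i : ℝ), rpow_natCast, div_pow]
    ring
  rw [hvalue]
  refine (hasSum_sum fun i _ =>
    (hasSum_poch_div_factorial_mul_descFactorial_mul_pow γ i hx).mul_left
      (stirling2 n i : ℝ)).congr_fun fun l => ?_
  have := congrArg (Nat.cast : ℕ → ℝ) (Nat.pow_eq_sum_stirlingSecond_mul_descFactorial n l)
  push_cast at this
  rw [this, stirling2_eq_stirlingSecond, mul_sum, sum_mul]
  exact sum_congr rfl fun i _ => by ring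

lemma Gamma_add_le_rpow_mul_Gamma {x s : ℝ} (hx : 0 < x) (hs0 : 0 < s) (hs1 : s < 1) :
    Gamma (x + s) ≤ x ^ s * Gamma x := by
  have hΓ := (Gamma_pos_of_pos hx).le
  have hconv := Gamma_mul_add_mul_le_rpow_Gamma_mul_rpow_Gamma hx (by linarith : 0 < x + 1)
    (sub_pos.2 hs1) hs0 (sub_add_cancel 1 s)
  rwa [show (1 - s) * x + s * (x + 1) = x + s by ring, Gamma_add_one hx.ne',
    mul_rpow hx.le hΓ, mul_left_comm, ← rpow_add' hΓ (by norm_num), sub_add_cancel,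
    rpow_one] at hconv

lemma poch_div_factorial_le {γ : ℝ} (hγ0 : 0 < γ) (hγ1 : γ < 1) {l : ℕ} (hl : l ≠ 0) :
    poch γ l / l ! ≤ (l : ℝ) ^ (γ - 1) / Gamma γ := by
  obtain ⟨k, rfl⟩ := Nat.exists_eq_succ_of_ne_zero hl
  have hk : (0 : ℝ) < (k + 1 : ℕ) := by positivity
  have hle := Gamma_add_le_rpow_mul_Gamma hk hγ0 hγ1
  rw [add_comm, Gamma_add_nat_eq_poch_mul hγ0, Nat.cast_succ, Gamma_nat_eq_factorial] at hle
  rw [div_le_div_iff₀ (by positivity) (Gamma_pos_of_pos hγ0), rpow_sub_one hk.ne',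
    factorial_succ]
  push_cast at hle ⊢
  field_simp
  linarith

lemma Gamma_add_one_lt_one {γ : ℝ} (hγ0 : 0 < γ) (hγ1 : γ < 1) : Gamma (γ + 1) < 1 := by
  -- Gautschi at `x = 2` and Bernoulli: `(γ + 1) Γ(γ + 1) = Γ(2 + γ) ≤ 2 ^ γ < 1 + γ`.
  have hle := Gamma_add_le_rpow_mul_Gamma two_pos hγ0 hγ1
  have hbernoulli : (2 : ℝ) ^ γ < 1 + γ := by
    simpa [one_add_one_eq_two] using
      rpow_one_add_lt_one_add_mul_self (s := 1) (by norm_num) one_ne_zero hγ0 hγ1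
  rw [Gamma_two, mul_one, show 2 + γ = (γ + 1) + 1 by ring, Gamma_add_one (by positivity)] at hle
  nlinarith

lemma summable_rpow_mul_pow (p : ℝ) {x : ℝ} (hx : |x| < 1) :
    Summable fun l : ℕ => (l : ℝ) ^ p * x ^ l := by
  have hmajorant : Summable fun l : ℕ => ((l + 1 : ℕ) : ℝ) ^ ⌈p⌉₊ * |x| ^ (l + 1) :=
    (summable_nat_add_iff 1).2
      (summable_pow_mul_geometric_of_norm_lt_one (R := ℝ) ⌈p⌉₊ (by rwa [norm_abs_eq_norm]))
  refine (summable_nat_add_iff 1).1 (hmajorant.of_norm_bounded fun l => ?_)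
  rw [norm_mul, norm_of_nonneg (rpow_nonneg (by positivity) _), norm_pow, Real.norm_eq_abs,
    ← rpow_natCast _ ⌈p⌉₊]
  gcongr
  · simp
  · exact Nat.le_ceil p

lemma poch_div_factorial_mul_pow_le {γ α : ℝ} (hγ0 : 0 < γ) (hγ1 : γ < 1) (hα : 0 ≤ α)
    {n : ℕ} (hn : n ≠ 0) (l : ℕ) :
    poch γ l / l ! * (l : ℝ) ^ n * α ^ l ≤ (Gamma γ)⁻¹ * ((l : ℝ) ^ ((n : ℝ) + γ - 1) * α ^ l) := by
  rcases eq_or_ne l 0 with rfl | hl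
  · simp only [Nat.cast_zero, zero_pow hn, mul_zero, zero_mul]
    have := Gamma_pos_of_pos hγ0
    positivity
  · have hl' : (0 : ℝ) < l := by positivity
    calc poch γ l / l ! * (l : ℝ) ^ n * α ^ l
        ≤ (l : ℝ) ^ (γ - 1) / Gamma γ * (l : ℝ) ^ n * α ^ l := by
          gcongr ?_ * _ * _
          exact poch_div_factorial_le hγ0 hγ1 hl
      _ = (Gamma γ)⁻¹ * ((l : ℝ) ^ ((n : ℝ) + γ - 1) * α ^ l) := by
          rw [show (n : ℝ) + γ - 1 = (γ - 1) + n by ring, rpow_add hl', rpow_natCast]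
          ring

lemma tsum_poch_div_factorial_mul_pow_lt {γ α : ℝ} (hγ0 : 0 < γ) (hγ1 : γ < 1) (hα0 : 0 < α)
    (hα1 : α < 1) {n : ℕ} (hn : n ≠ 0) :
    ∑' l : ℕ, poch γ l / l ! * (l : ℝ) ^ n * α ^ l <
      (Gamma γ)⁻¹ * ∑' l : ℕ, (l : ℝ) ^ ((n : ℝ) + γ - 1) * α ^ l := by
  have hα : |α| < 1 := abs_lt.2 ⟨by linarith, hα1⟩
  rw [← tsum_mul_left]
  refine Summable.tsum_lt_tsum (i := 1) (poch_div_factorial_mul_pow_le hγ0 hγ1 hα0.le hn) ?_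
    (hasSum_poch_div_factorial_mul_pow_mul_pow γ n hα).summable
    ((summable_rpow_mul_pow _ hα).mul_left _)
  have hγΓ : γ < (Gamma γ)⁻¹ := by
    rw [lt_inv_comm₀ hγ0 (Gamma_pos_of_pos hγ0), inv_eq_one_div, lt_div_iff₀ hγ0, mul_comm,
      ← Gamma_add_one hγ0.ne']
    exact Gamma_add_one_lt_one hγ0 hγ1
  simpa [poch] using mul_lt_mul_of_pos_right hγΓ hα0

lemma abs_tcoef_eq_tsum {γ α : ℝ} (hγ : 0 < γ) (hα0 : 0 ≤ α) (hα1 : α < 1) (n : ℕ) :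
    |tcoef α γ n| = (1 - α) ^ γ * (γ ^ n)⁻¹ * ∑' l : ℕ, poch γ l / l ! * (l : ℝ) ^ n * α ^ l := by
  have hα : |α| < 1 := abs_lt.2 ⟨by linarith, hα1⟩
  have hα' : 0 < 1 - α := by linarith
  have hS : 0 ≤ ∑ i ∈ range (n + 1), (stirling2 n i : ℝ) * poch γ i * (α / (1 - α)) ^ i :=
    sum_nonneg fun i _ => by have := poch_pos hγ i; positivity
  rw [(hasSum_poch_div_factorial_mul_pow_mul_pow γ n hα).tsum_eq, tcoef, abs_mul, abs_mul,
    abs_pow, abs_neg, abs_one, one_pow, one_mul, abs_of_pos (by positivity), abs_of_nonneg hS,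
    rpow_neg hα'.le]
  field_simp

/-- For `0 < γ < 1`, `0 < α < 1`, `n ≥ 1`:
`|t_n| < (1−α)^γ γ^{−n} Γ(γ)^{−1} ∑_{l≥1} l^{n+γ−1} α^l`, the series (the polylogarithm
`Li_{−n−γ+1}(α)`) being convergent. -/
theorem tcoef_upper_bound (α γ : ℝ) (hγ0 : 0 < γ) (hγ1 : γ < 1)
    (hα0 : 0 < α) (hα1 : α < 1) (n : ℕ) (hn : 1 ≤ n) :
    Summable (fun l : ℕ => (l : ℝ) ^ ((n : ℝ) + γ - 1) * α^l) ∧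
    |tcoef α γ n| < (1 - α) ^ γ * (γ^n)⁻¹ * (Real.Gamma γ)⁻¹ *
      ∑' l : ℕ, (l : ℝ) ^ ((n : ℝ) + γ - 1) * α^l := by
  refine ⟨summable_rpow_mul_pow _ (abs_lt.2 ⟨by linarith, hα1⟩), ?_⟩
  have hα' : 0 < 1 - α := by linarith
  rw [abs_tcoef_eq_tsum hγ0 hα0.le hα1, mul_assoc _ (Gamma γ)⁻¹]
  exact mul_lt_mul_of_pos_left (tsum_poch_div_factorial_mul_pow_lt hγ0 hγ1 hα0 hα1 (by omega))
    (by positivity)
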